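/- Let 2 ≤ d ≤ n−1 and let B'_{n,d} = B_{n,d} − {(u_{n−d+1}, u_{n−d+2})} + {(u_{n−d+1}, u_1)}. Then q(B'_{n,d}) > q(B_{n,d}). -/

import Mathlib

open Matrix

namespace SignlessDigraph

variable {n : ℕ}

/-- Real adjacency matrix of a (multi)digraph on `Fin n`, given by arc multiplicities. -/
def adjMat (W : Fin n → Fin n → ℕ) : Matrix (Fin n) (Fin n) ℝ :=
  fun i j => (W i j : ℝ)

/-- Outdegree of a vertex. -/
def outdeg (W : Fin n → Fin n → ℕ) (i : Fin n) : ℕ := ∑ j, W i j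

/-- Indegree of a vertex. -/
def indeg (W : Fin n → Fin n → ℕ) (i : Fin n) : ℕ := ∑ j, W j i

/-- The signless Laplacian matrix `Q(D) = diag(outdegrees) + A(D)`. -/
noncomputable def Qmat (W : Fin n → Fin n → ℕ) : Matrix (Fin n) (Fin n) ℝ :=
  Matrix.diagonal (fun i => (outdeg W i : ℝ)) + adjMat W

/-- Spectral radius of a real matrix: the maximum modulus of its (complex) eigenvalues. -/
noncomputable def radius (M : Matrix (Fin n) (Fin n) ℝ) : ℝ :=
  sSup {r : ℝ | ∃ μ ∈ spectrum ℂ (M.map ((↑) : ℝ → ℂ)), r = ‖μ‖}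

/-- The signless Laplacian spectral radius `q(D)`. -/
noncomputable def q (W : Fin n → Fin n → ℕ) : ℝ := radius (Qmat W)

/-- The (adjacency) spectral radius `ρ(D)`. -/
noncomputable def rho (W : Fin n → Fin n → ℕ) : ℝ := radius (adjMat W)

/-- A digraph is simple: no loops and no multiple arcs. -/
def Simple (W : Fin n → Fin n → ℕ) : Prop :=
  (∀ i, W i i = 0) ∧ ∀ i j, W i j ≤ 1

/-- Strong connectivity: every vertex is reachable from every vertex by a directed path. -/
def StronglyConnected (W : Fin n → Fin n → ℕ) : Prop :=
  ∀ i j : Fin n, Relation.ReflTransGen (fun a b => W a b ≠ 0) i j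

/-- Isomorphism of digraphs on `Fin n`. -/
def Iso (W W' : Fin n → Fin n → ℕ) : Prop :=
  ∃ e : Fin n ≃ Fin n, ∀ i j, W (e i) (e j) = W' i j

/-- The clique number: maximum size of a set of vertices with all arcs in both directions. -/
noncomputable def cliqueNum (W : Fin n → Fin n → ℕ) : ℕ :=
  sSup {d : ℕ | ∃ s : Finset (Fin n), s.card = d ∧ ∀ i ∈ s, ∀ j ∈ s, i ≠ j → W i j ≠ 0}

/-- `W` has a directed cycle of length `c`. -/
def HasCycleLen (W : Fin n → Fin n → ℕ) (c : ℕ) : Prop :=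
  ∃ (hc : 2 ≤ c) (p : Fin c → Fin n), Function.Injective p ∧
    ∀ i : Fin c, W (p i) (p ⟨((i : ℕ) + 1) % c, Nat.mod_lt _ (by omega)⟩) ≠ 0

/-- The girth: length of a shortest directed cycle. -/
noncomputable def girth (W : Fin n → Fin n → ℕ) : ℕ := sInf {c | HasCycleLen W c}

/-- The complete digraph `K_n^↔`. -/
def Kcomp (n : ℕ) : Fin n → Fin n → ℕ := fun i j => if i = j then 0 else 1

/-- The directed cycle `C_n^→`, with arcs `i → i+1 (mod n)`. -/
def cyc (n : ℕ) : Fin n → Fin n → ℕ := fun i j => if (j : ℕ) = ((i : ℕ) + 1) % n then 1 else 0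

/-- The digraph `B_{n,d}` (for `2 ≤ d ≤ n-1`): a complete digraph on the vertices
`0, …, d-1` together with a directed path `0 → d → d+1 → ⋯ → n-1 → 1`
(the path `u_1 u_2 ⋯ u_{n-d+2}` with `u_1 = 0`, `u_{n-d+2} = 1`,
and internal vertices `d, …, n-1`). -/
def B (n d : ℕ) : Fin n → Fin n → ℕ := fun i j =>
  if i ≠ j ∧ (i : ℕ) < d ∧ (j : ℕ) < d then 1
  else if (i : ℕ) = 0 ∧ (j : ℕ) = d then 1
  else if d ≤ (i : ℕ) ∧ (j : ℕ) = (i : ℕ) + 1 then 1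
  else if (i : ℕ) = n - 1 ∧ (j : ℕ) = 1 then 1
  else 0

/-- `B'_{n,d} = B_{n,d} − (u_{n-d+1}, u_{n-d+2}) + (u_{n-d+1}, u_1)`, i.e. the arc
`n-1 → 1` is replaced by the arc `n-1 → 0`. -/
def B' (n d : ℕ) : Fin n → Fin n → ℕ := fun i j =>
  if (i : ℕ) = n - 1 ∧ (j : ℕ) = 1 then 0
  else if (i : ℕ) = n - 1 ∧ (j : ℕ) = 0 then 1
  else B n d i j

/-- The digraph `C_{n,g}` (for `2 ≤ g ≤ n-1`): vertices `u_1, …, u_n` are `0, …, n-1`,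
with arcs `i → i+1` for `0 ≤ i ≤ n-2` together with the arcs `g-1 → 0` and `n-1 → 0`. -/
def Cng (n g : ℕ) : Fin n → Fin n → ℕ := fun i j =>
  if (j : ℕ) = (i : ℕ) + 1 then 1
  else if ((i : ℕ) = g - 1 ∨ (i : ℕ) = n - 1) ∧ (j : ℕ) = 0 then 1
  else 0

/-- `C'_{n,g} = C_{n,g} − (u_n, u_1) + (u_n, u_g)`, i.e. the arc `n-1 → 0` is replaced by
the arc `n-1 → g-1`. -/
def Cng' (n g : ℕ) : Fin n → Fin n → ℕ := fun i j =>
  if (i : ℕ) = n - 1 ∧ (j : ℕ) = 0 then 0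
  else if (i : ℕ) = n - 1 ∧ (j : ℕ) = g - 1 then 1
  else Cng n g i j

/-- The θ-digraph `θ(a,b,c)` realized on `Fin n` (intended for `n = a + b + c + 2`):
vertex `0` is the common initial vertex of the paths `P_{a+2}`, `P_{b+2}` and terminal
vertex of `P_{c+2}`; vertex `1` is the common terminal vertex of `P_{a+2}`, `P_{b+2}`
and initial vertex of `P_{c+2}`; the internal vertices of the three paths are
`2, …, a+1`, `a+2, …, a+b+1` and `a+b+2, …, a+b+c+1` respectively. -/
def theta (n a b c : ℕ) : Fin n → Fin n → ℕ := fun i j =>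
  if ((a = 0 ∧ (i : ℕ) = 0 ∧ (j : ℕ) = 1) ∨
      (a ≠ 0 ∧ (((i : ℕ) = 0 ∧ (j : ℕ) = 2) ∨
        (2 ≤ (i : ℕ) ∧ (i : ℕ) ≤ a ∧ (j : ℕ) = (i : ℕ) + 1) ∨
        ((i : ℕ) = a + 1 ∧ (j : ℕ) = 1))) ∨
      (b = 0 ∧ (i : ℕ) = 0 ∧ (j : ℕ) = 1) ∨
      (b ≠ 0 ∧ (((i : ℕ) = 0 ∧ (j : ℕ) = a + 2) ∨
        (a + 2 ≤ (i : ℕ) ∧ (i : ℕ) ≤ a + b ∧ (j : ℕ) = (i : ℕ) + 1) ∨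
        ((i : ℕ) = a + b + 1 ∧ (j : ℕ) = 1))) ∨
      (c = 0 ∧ (i : ℕ) = 1 ∧ (j : ℕ) = 0) ∨
      (c ≠ 0 ∧ (((i : ℕ) = 1 ∧ (j : ℕ) = a + b + 2) ∨
        (a + b + 2 ≤ (i : ℕ) ∧ (i : ℕ) ≤ a + b + c ∧ (j : ℕ) = (i : ℕ) + 1) ∨
        ((i : ℕ) = a + b + c + 1 ∧ (j : ℕ) = 0))))
  then 1 else 0

/-- The digraph `K→(n,k,m)`: the vertex set is partitioned into
`V₁ = {0,…,m-1}`, `S = {m,…,m+k-1}`, `V₂ = {m+k,…,n-1}`; it is the complete digraph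
with all arcs from `V₂` to `V₁` removed. -/
def Kdir (n k m : ℕ) : Fin n → Fin n → ℕ := fun i j =>
  if i = j then 0
  else if m + k ≤ (i : ℕ) ∧ (j : ℕ) < m then 0
  else 1

/-- The digraph `D_{uv}` obtained from `D` by deleting the arc `(u,v)`, identifying `u`
with `v` (the merged vertex is `v`; the vertex `u` becomes isolated) and deleting
multiple arcs (and loops). -/
def contract (W : Fin n → Fin n → ℕ) (u v : Fin n) : Fin n → Fin n → ℕ :=
  fun i j =>
    if i = u ∨ j = u ∨ i = j then 0
    else if i = v then min 1 (W v j + W u j)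
    else if j = v then min 1 (W i v + W i u)
    else min 1 (W i j)

/-- The digraph `D^w` obtained from `D` by subdividing the arc `(u,v)` with a new
vertex `w` (realized as the last vertex of `Fin (n+1)`). -/
def subdivide (W : Fin n → Fin n → ℕ) (u v : Fin n) : Fin (n + 1) → Fin (n + 1) → ℕ :=
  fun i j =>
    if hi : (i : ℕ) < n then
      if hj : (j : ℕ) < n then
        if (⟨(i : ℕ), hi⟩ : Fin n) = u ∧ (⟨(j : ℕ), hj⟩ : Fin n) = v then 0
        else W ⟨(i : ℕ), hi⟩ ⟨(j : ℕ), hj⟩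
      else if (⟨(i : ℕ), hi⟩ : Fin n) = u then 1 else 0
    else
      if hj : (j : ℕ) < n then (if (⟨(j : ℕ), hj⟩ : Fin n) = v then 1 else 0)
      else 0


/-!
Let `x > 0` be a Perron vector of `Q(B)`, which is primitive because `B` is strongly
connected. Vertices `0` and `1` both lie in the clique, but `0` has the extra out-neighbour
`d`; comparing rows `0` and `1` of `Q(B) x = q(B) x` forces `x 0 > x 1`. Moving the arc
`n-1 → 1` to `n-1 → 0` changes only row `n-1` of the signless Laplacian, so
`Q(B') x = q(B) x + (x 0 - x 1) e_{n-1}` with a nonnegative, nonzero excess. Since `Q(B')` is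
primitive as well, the strict Collatz–Wielandt bound turns this into `q(B') > q(B)`.
-/

open scoped NNReal ENNReal
open Filter

section PerronFrobenius

variable {M : Matrix (Fin n) (Fin n) ℝ}

def IsPrimitive (M : Matrix (Fin n) (Fin n) ℝ) : Prop :=
  (∀ i j, 0 ≤ M i j) ∧ ∃ N, 0 < N ∧ ∀ i j, 0 < (M ^ N) i j

lemma radius_eq_sSup_image (M : Matrix (Fin n) (Fin n) ℝ) :
    radius M = sSup (norm '' spectrum ℂ (M.map ((↑) : ℝ → ℂ))) := by
  simp only [radius, Set.image, eq_comm]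

lemma norm_le_radius {μ : ℂ} (hμ : μ ∈ spectrum ℂ (M.map ((↑) : ℝ → ℂ))) :
    ‖μ‖ ≤ radius M := by
  rw [radius_eq_sSup_image]
  exact le_csSup ((Matrix.finite_spectrum _).image _).bddAbove ⟨μ, hμ, rfl⟩

lemma exists_norm_eq_radius [NeZero n] (M : Matrix (Fin n) (Fin n) ℝ) :
    ∃ μ ∈ spectrum ℂ (M.map ((↑) : ℝ → ℂ)), ‖μ‖ = radius M := by
  rw [radius_eq_sSup_image]
  exact ((spectrum.nonempty_of_isAlgClosed_of_finiteDimensional ℂ _).image _).csSup_mem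
    ((Matrix.finite_spectrum _).image _)

lemma radius_nonneg [NeZero n] (M : Matrix (Fin n) (Fin n) ℝ) : 0 ≤ radius M := by
  obtain ⟨μ, -, h⟩ := exists_norm_eq_radius M
  exact h ▸ norm_nonneg μ

lemma spectralRadius_map_le_radius (M : Matrix (Fin n) (Fin n) ℝ) :
    spectralRadius ℂ (M.map ((↑) : ℝ → ℂ)) ≤ ENNReal.ofReal (radius M) :=
  iSup₂_le fun μ hμ => by
    rw [← enorm_eq_nnnorm, ← ofReal_norm]
    exact ENNReal.ofReal_le_ofReal (norm_le_radius hμ)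

lemma exists_mulVec_eq_smul_of_mem_spectrum {A : Matrix (Fin n) (Fin n) ℂ} {μ : ℂ}
    (hμ : μ ∈ spectrum ℂ A) : ∃ v : Fin n → ℂ, v ≠ 0 ∧ A *ᵥ v = μ • v := by
  rw [← Matrix.spectrum_toLin', ← Module.End.hasEigenvalue_iff_mem_spectrum] at hμ
  obtain ⟨v, hv⟩ := hμ.exists_hasEigenvector
  exact ⟨v, hv.2, by simpa using hv.apply_eq_smul⟩

lemma map_ofReal_pow (M : Matrix (Fin n) (Fin n) ℝ) (k : ℕ) :
    M.map ((↑) : ℝ → ℂ) ^ k = (M ^ k).map ((↑) : ℝ → ℂ) :=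
  (map_pow Complex.ofRealHom.mapMatrix M k).symm

lemma mulVec_mono (hM : ∀ i j, 0 ≤ M i j) {v w : Fin n → ℝ} (hvw : v ≤ w) :
    M *ᵥ v ≤ M *ᵥ w := fun i => by
  simp only [Matrix.mulVec, dotProduct]
  exact Finset.sum_le_sum fun j _ => mul_le_mul_of_nonneg_left (hvw j) (hM i j)

lemma mulVec_pos (hM : ∀ i j, 0 < M i j) {v : Fin n → ℝ} (hv : 0 ≤ v) (hv0 : v ≠ 0)
    (i : Fin n) : 0 < (M *ᵥ v) i := by
  obtain ⟨j, hj⟩ := Function.ne_iff.mp hv0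
  exact lt_of_lt_of_le (mul_pos (hM i j) (lt_of_le_of_ne (hv j) (Ne.symm hj)))
    (Finset.single_le_sum (f := fun j => M i j * v j)
      (fun k _ => mul_nonneg (hM i k).le (hv k)) (Finset.mem_univ j))

lemma pow_apply_nonneg (hM : ∀ i j, 0 ≤ M i j) (k : ℕ) (i j : Fin n) : 0 ≤ (M ^ k) i j := by
  induction k generalizing j with
  | zero => by_cases h : i = j <;> simp [h]
  | succ k ih =>
    rw [pow_succ, Matrix.mul_apply]
    exact Finset.sum_nonneg fun l _ => mul_nonneg (ih l) (hM l j)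

lemma pow_apply_mul_le_pow_succ_apply (hM : ∀ i j, 0 ≤ M i j) (k : ℕ) (i l j : Fin n) :
    (M ^ k) i l * M l j ≤ (M ^ (k + 1)) i j := by
  rw [pow_succ, Matrix.mul_apply]
  exact Finset.single_le_sum (f := fun l => (M ^ k) i l * M l j)
    (fun l _ => mul_nonneg (pow_apply_nonneg hM k i l) (hM l j)) (Finset.mem_univ l)

lemma smul_pow_le_pow_mulVec (hM : ∀ i j, 0 ≤ M i j) {c : ℝ} (hc : 0 ≤ c) {z : Fin n → ℝ}
    (hcz : c • z ≤ M *ᵥ z) (k : ℕ) : c ^ k • z ≤ (M ^ k) *ᵥ z := by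
  induction k with
  | zero => simp
  | succ k ih =>
    calc c ^ (k + 1) • z = c ^ k • (c • z) := by rw [pow_succ, mul_smul]
      _ ≤ c ^ k • (M *ᵥ z) := smul_le_smul_of_nonneg_left hcz (pow_nonneg hc k)
      _ = M *ᵥ (c ^ k • z) := (Matrix.mulVec_smul M (c ^ k) z).symm
      _ ≤ M *ᵥ ((M ^ k) *ᵥ z) := mulVec_mono hM ih
      _ = (M ^ (k + 1)) *ᵥ z := by rw [Matrix.mulVec_mulVec, pow_succ']

/-- Collatz–Wielandt: `c^k z ≤ M^k z` gives `c^k ≤ ‖M^k‖` in the `ℓ^∞` operator norm, and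
Gelfand's formula turns this into `c ≤ ρ(M)`. -/
lemma le_radius_of_smul_le_mulVec [NeZero n] (hM : ∀ i j, 0 ≤ M i j) {z : Fin n → ℝ}
    (hz : ∀ i, 0 < z i) {c : ℝ} (hcz : c • z ≤ M *ᵥ z) : c ≤ radius M := by
  rcases le_or_gt c 0 with hc | hc
  · exact hc.trans (radius_nonneg M)
  let := Matrix.linftyOpNormedRing (n := Fin n) (α := ℂ)
  let := Matrix.linftyOpNormedAlgebra (R := ℂ) (n := Fin n) (α := ℂ)
  let : CompleteSpace (Matrix (Fin n) (Fin n) ℂ) := FiniteDimensional.complete ℂ _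
  set A := M.map ((↑) : ℝ → ℂ)
  obtain ⟨i₀, -, hi₀⟩ := Finset.univ.exists_max_image z Finset.univ_nonempty
  set zC : Fin n → ℂ := fun i => z i
  have hzC : ‖zC‖ ≤ z i₀ := (pi_norm_le_iff_of_nonneg (hz i₀).le).2 fun i => by
    simpa [zC, abs_of_pos (hz i)] using hi₀ i (Finset.mem_univ i)
  have hpow : ∀ k : ℕ, c ^ k ≤ ‖A ^ k‖ := fun k => by
    have hAk : (A ^ k) *ᵥ zC = fun i => (((M ^ k) *ᵥ z) i : ℂ) := by
      funext i
      simp [A, zC, map_ofReal_pow, Matrix.mulVec, dotProduct]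
    have := calc c ^ k * z i₀ ≤ ((M ^ k) *ᵥ z) i₀ :=
          smul_pow_le_pow_mulVec hM hc.le hcz k i₀
      _ ≤ ‖((A ^ k) *ᵥ zC) i₀‖ := by rw [hAk, Complex.norm_real]; exact le_abs_self _
      _ ≤ ‖(A ^ k) *ᵥ zC‖ := norm_le_pi_norm _ i₀
      _ ≤ ‖A ^ k‖ * ‖zC‖ := Matrix.linfty_opNorm_mulVec _ _
      _ ≤ ‖A ^ k‖ * z i₀ := mul_le_mul_of_nonneg_left hzC (norm_nonneg _)
    exact le_of_mul_le_mul_right this (hz i₀)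
  have hgelfand : ENNReal.ofReal c ≤ spectralRadius ℂ A := by
    refine ge_of_tendsto (spectrum.pow_nnnorm_pow_one_div_tendsto_nhds_spectralRadius A) ?_
    filter_upwards [eventually_ne_atTop 0] with k hk
    calc ENNReal.ofReal c = (ENNReal.ofReal c ^ k) ^ (1 / (k : ℝ)) := by
          rw [one_div, ENNReal.pow_rpow_inv_natCast hk]
      _ ≤ (‖A ^ k‖₊ : ℝ≥0∞) ^ (1 / (k : ℝ)) := by
          gcongr
          rw [← ENNReal.ofReal_pow hc.le, ← enorm_eq_nnnorm, ← ofReal_norm]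
          exact ENNReal.ofReal_le_ofReal (hpow k)
  exact (ENNReal.ofReal_le_ofReal_iff (radius_nonneg M)).1
    (hgelfand.trans (spectralRadius_map_le_radius M))

lemma isPrimitive_of_reflTransGen (hM : ∀ i j, 0 ≤ M i j) (hdiag : ∀ i, 0 < M i i)
    (hconn : ∀ i j, Relation.ReflTransGen (fun a b => M a b ≠ 0) i j) : IsPrimitive M := by
  have hreach : ∀ i j, ∃ k, 0 < (M ^ k) i j := fun i j => by
    induction hconn i j with
    | refl => exact ⟨0, by simp⟩
    | @tail b c _ hbc ih =>
      obtain ⟨k, hk⟩ := ih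
      exact ⟨k + 1, (mul_pos hk ((hM b c).lt_of_ne' hbc)).trans_le
        (pow_apply_mul_le_pow_succ_apply hM k i b c)⟩
  -- the positive diagonal keeps a positive entry positive in all higher powers
  have hmono : ∀ i j k m, k ≤ m → 0 < (M ^ k) i j → 0 < (M ^ m) i j := by
    intro i j k m hkm hk
    induction m, hkm using Nat.le_induction with
    | base => exact hk
    | succ m _ ih =>
      exact (mul_pos ih (hdiag j)).trans_le (pow_apply_mul_le_pow_succ_apply hM m i j j)
  choose f hf using hreach
  refine ⟨hM, 1 + ∑ p : Fin n × Fin n, f p.1 p.2, by omega,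
    fun i j => hmono i j _ _ ?_ (hf i j)⟩
  have : f i j ≤ ∑ p : Fin n × Fin n, f p.1 p.2 :=
    Finset.single_le_sum (f := fun p : Fin n × Fin n => f p.1 p.2) (fun _ _ => Nat.zero_le _)
      (Finset.mem_univ (i, j))
  omega

lemma lt_radius_of_smul_le_mulVec [NeZero n] (hM : IsPrimitive M) {x : Fin n → ℝ}
    (hx : 0 ≤ x) (hx0 : x ≠ 0) {c : ℝ} (hcx : c • x ≤ M *ᵥ x) (hne : c • x ≠ M *ᵥ x) :
    c < radius M := by
  obtain ⟨hM, N, -, hN⟩ := hM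
  set w := (M ^ N) *ᵥ x
  have hw : ∀ i, 0 < w i := mulVec_pos hN hx hx0
  -- `M` commutes with `M ^ N`, so the slack `M x - c x ≥ 0, ≠ 0` becomes strictly positive
  have hMw : ∀ i, 0 < (M *ᵥ w - c • w) i := by
    have : M *ᵥ w - c • w = (M ^ N) *ᵥ (M *ᵥ x - c • x) := by
      rw [Matrix.mulVec_sub, Matrix.mulVec_smul, Matrix.mulVec_mulVec, Matrix.mulVec_mulVec,
        ← pow_succ, ← pow_succ']
    rw [this]
    exact mulVec_pos hN (sub_nonneg.2 hcx) (sub_ne_zero.2 hne.symm)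
  obtain ⟨i₀, -, hi₀⟩ := Finset.univ.exists_min_image (fun i => (M *ᵥ w) i / w i)
    Finset.univ_nonempty
  have hc : c < (M *ᵥ w) i₀ / w i₀ := by
    rw [lt_div_iff₀ (hw i₀)]
    simpa using hMw i₀
  refine hc.trans_le (le_radius_of_smul_le_mulVec hM hw fun i => ?_)
  simpa [mul_comm, ← le_div_iff₀ (hw i)] using hi₀ i (Finset.mem_univ i)

lemma exists_pos_mulVec_eq_radius_smul [NeZero n] (hM : IsPrimitive M) :
    ∃ x : Fin n → ℝ, (∀ i, 0 < x i) ∧ M *ᵥ x = radius M • x := by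
  obtain ⟨μ, hμ, hμr⟩ := exists_norm_eq_radius M
  obtain ⟨v, hv0, hv⟩ := exists_mulVec_eq_smul_of_mem_spectrum hμ
  set x : Fin n → ℝ := fun i => ‖v i‖
  have hx : 0 ≤ x := fun i => norm_nonneg _
  have hx0 : x ≠ 0 := fun h => hv0 (funext fun i => norm_eq_zero.1 (congrFun h i))
  -- the triangle inequality makes `|v|` subinvariant
  have hsub : radius M • x ≤ M *ᵥ x := fun i => by
    have hvi : ∑ j, (M i j : ℂ) * v j = μ * v i := by
      simpa [Matrix.mulVec, dotProduct] using congrFun hv i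
    calc radius M * x i = ‖∑ j, (M i j : ℂ) * v j‖ := by rw [hvi, norm_mul, hμr]
      _ ≤ ∑ j, ‖(M i j : ℂ) * v j‖ := norm_sum_le _ _
      _ = (M *ᵥ x) i := by
        simp [Matrix.mulVec, dotProduct, x, abs_of_nonneg (hM.1 i _)]
  have hfix : M *ᵥ x = radius M • x := by
    by_contra hne
    exact (lt_radius_of_smul_le_mulVec hM hx hx0 hsub (Ne.symm hne)).false
  have hpow (k : ℕ) : (M ^ k) *ᵥ x = radius M ^ k • x := by
    induction k with
    | zero => simp
    | succ k ih =>
      rw [pow_succ', ← Matrix.mulVec_mulVec, ih, Matrix.mulVec_smul, hfix, smul_smul, pow_succ]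
  refine ⟨x, fun i => ?_, hfix⟩
  obtain ⟨-, N, -, hN⟩ := hM
  have := mulVec_pos hN hx hx0 i
  rw [hpow] at this
  exact pos_of_mul_pos_right this (pow_nonneg (radius_nonneg M) N)

end PerronFrobenius

section Digraph

variable {W : Fin n → Fin n → ℕ}

lemma Qmat_apply (W : Fin n → Fin n → ℕ) (i j : Fin n) :
    Qmat W i j = (if i = j then (outdeg W i : ℝ) else 0) + W i j := by
  simp [Qmat, Matrix.diagonal_apply, adjMat]

lemma Qmat_mulVec_apply (W : Fin n → Fin n → ℕ) (x : Fin n → ℝ) (i : Fin n) :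
    (Qmat W *ᵥ x) i = outdeg W i * x i + ∑ j, (W i j : ℝ) * x j := by
  rw [Qmat, Matrix.add_mulVec, Pi.add_apply, Matrix.mulVec_diagonal]
  rfl

lemma outdeg_pos_of_stronglyConnected (hW : StronglyConnected W) {i j : Fin n} (hij : i ≠ j) :
    0 < outdeg W i := by
  obtain ⟨k, hik, -⟩ := ((hW i j).cases_head).resolve_left hij
  exact (Nat.pos_of_ne_zero hik).trans_le
    (Finset.single_le_sum (f := W i) (fun _ _ => Nat.zero_le _) (Finset.mem_univ k))

lemma isPrimitive_Qmat [Nontrivial (Fin n)] (hW : StronglyConnected W) : IsPrimitive (Qmat W) := by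
  have hnonneg : ∀ i j, 0 ≤ Qmat W i j := fun i j => by rw [Qmat_apply]; positivity
  refine isPrimitive_of_reflTransGen hnonneg (fun i => ?_) fun i j => ?_
  · obtain ⟨j, hij⟩ := exists_ne i
    rw [Qmat_apply, if_pos rfl]
    have : (0 : ℝ) < outdeg W i := by exact_mod_cast outdeg_pos_of_stronglyConnected hW hij.symm
    positivity
  · refine Relation.ReflTransGen.mono (fun a b hab => ?_) i j (hW i j)
    rw [Qmat_apply]
    have : (0 : ℝ) < W a b := by exact_mod_cast Nat.pos_of_ne_zero hab
    positivity

lemma sum_eq_add_add_sum_erase_erase {ι M : Type*} [Fintype ι] [DecidableEq ι]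
    [AddCommMonoid M] {u v : ι} (huv : u ≠ v) (f : ι → M) :
    ∑ j, f j = f u + f v + ∑ j ∈ (Finset.univ.erase u).erase v, f j := by
  rw [← Finset.add_sum_erase _ _ (Finset.mem_univ u),
    ← Finset.add_sum_erase _ _ (Finset.mem_erase.2 ⟨huv.symm, Finset.mem_univ v⟩), add_assoc]

lemma lt_of_Qmat_mulVec_eq_smul {x : Fin n → ℝ} (hx : ∀ i, 0 < x i) {r : ℝ}
    (hQx : Qmat W *ᵥ x = r • x) {u v w : Fin n} (huv : u ≠ v) (hwu : w ≠ u) (hwv : w ≠ v)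
    (hu : W u u = 0) (hv : W v v = 0) (hsymm : W u v = W v u)
    (hle : ∀ j, j ≠ u → j ≠ v → W v j ≤ W u j) (hlt : W v w < W u w) : x v < x u := by
  set T := (Finset.univ.erase u).erase v
  have hmemT {j : Fin n} (hj : j ∈ T) : j ≠ u ∧ j ≠ v := by
    simp only [T, Finset.mem_erase] at hj
    exact ⟨hj.2.1, hj.1⟩
  have hrow (i : Fin n) : r * x i = outdeg W i * x i + ∑ j, (W i j : ℝ) * x j := by
    rw [← Qmat_mulVec_apply, hQx, Pi.smul_apply, smul_eq_mul]
  have hdeg (i : Fin n) : (outdeg W i : ℝ) = W i u + W i v + ∑ j ∈ T, (W i j : ℝ) := by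
    rw [outdeg, Nat.cast_sum, sum_eq_add_add_sum_erase_erase huv]
  have hrowu := hrow u
  have hrowv := hrow v
  rw [hdeg, sum_eq_add_add_sum_erase_erase huv] at hrowu hrowv
  simp only [hu, hv, hsymm, Nat.cast_zero, zero_mul, zero_add, add_zero] at hrowu hrowv
  have hS : ∑ j ∈ T, (W v j : ℝ) * x j ≤ ∑ j ∈ T, (W u j : ℝ) * x j :=
    Finset.sum_le_sum fun j hj => mul_le_mul_of_nonneg_right
      (by exact_mod_cast hle j (hmemT hj).1 (hmemT hj).2) (hx j).le
  have hE : ∑ j ∈ T, (W v j : ℝ) < ∑ j ∈ T, (W u j : ℝ) := by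
    exact_mod_cast Finset.sum_lt_sum (fun j hj => hle j (hmemT hj).1 (hmemT hj).2)
      ⟨w, by simp [T, hwu, hwv], hlt⟩
  have hSu : 0 ≤ ∑ j ∈ T, (W u j : ℝ) * x j :=
    Finset.sum_nonneg fun j _ => mul_nonneg (Nat.cast_nonneg _) (hx j).le
  -- Row `u` gives `r ≥ E_u`, and subtracting row `v` from row `u` gives
  -- `(r - E_u) (x u - x v) = (E_u - E_v) x v + S_u - S_v > 0`, where `E_i = ∑_{j ∈ T} W i j`
  -- and `S_i = ∑_{j ∈ T} W i j x j`.
  have hr : ∑ j ∈ T, (W u j : ℝ) ≤ r := by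
    nlinarith [hx u, hx v, (W v u).cast_nonneg (α := ℝ)]
  nlinarith [hx u, hx v, mul_pos (sub_pos.2 hE) (hx v)]

lemma reflTransGen_of_succ {r : Fin n → Fin n → Prop} {a : ℕ}
    (hstep : ∀ i j : Fin n, a ≤ (i : ℕ) → (j : ℕ) = i + 1 → r i j) {i j : Fin n}
    (hai : a ≤ (i : ℕ)) (hij : i ≤ j) : Relation.ReflTransGen r i j := by
  obtain ⟨k, hk⟩ := Nat.exists_eq_add_of_le (Fin.le_def.1 hij)
  induction k generalizing j with
  | zero => rw [Fin.ext hk]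
  | succ k ih =>
    have hk' : (i : ℕ) + k < n := by omega
    exact (ih (j := ⟨i + k, hk'⟩) (Fin.le_def.2 (by simp)) rfl).tail
      (hstep _ _ (by simp; omega) (by simp; omega))

lemma stronglyConnected_of_clique_of_path {d : ℕ} (hd : 0 < d) (hdn : d < n)
    (hK : ∀ i j : Fin n, (i : ℕ) < d → (j : ℕ) < d → i ≠ j → W i j ≠ 0)
    (hfirst : ∀ i j : Fin n, (i : ℕ) = 0 → (j : ℕ) = d → W i j ≠ 0)
    (hpath : ∀ i j : Fin n, d ≤ (i : ℕ) → (j : ℕ) = i + 1 → W i j ≠ 0)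
    {t : Fin n} (ht : (t : ℕ) < d) (hlast : ∀ i : Fin n, (i : ℕ) = n - 1 → W i t ≠ 0) :
    StronglyConnected W := by
  have hclique {i j : Fin n} (hi : (i : ℕ) < d) (hj : (j : ℕ) < d) :
      Relation.ReflTransGen (fun a b => W a b ≠ 0) i j := by
    by_cases hij : i = j
    · rw [hij]
    · exact .single (hK i j hi hj hij)
  let v₀ : Fin n := ⟨0, by omega⟩
  let v_d : Fin n := ⟨d, hdn⟩
  let v_last : Fin n := ⟨n - 1, by omega⟩
  have hfrom (j : Fin n) : Relation.ReflTransGen (fun a b => W a b ≠ 0) v₀ j := by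
    by_cases hj : (j : ℕ) < d
    · exact hclique hd hj
    · exact .head (hfirst v₀ v_d rfl rfl)
        (reflTransGen_of_succ hpath le_rfl (Fin.le_def.2 (by simp [v_d]; omega)))
  have hto (i : Fin n) : Relation.ReflTransGen (fun a b => W a b ≠ 0) i v₀ := by
    by_cases hi : (i : ℕ) < d
    · exact hclique hi hd
    · exact ((reflTransGen_of_succ hpath (not_lt.1 hi) (j := v_last)
        (Fin.le_def.2 (by simp [v_last]; omega))).tail (hlast v_last rfl)).trans (hclique ht hd)
  exact fun i j => (hto i).trans (hfrom j)

end Digraph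

section B

variable {d : ℕ}

lemma B'_apply_of_ne (i j : Fin n) (hi : (i : ℕ) ≠ n - 1) : B' n d i j = B n d i j := by
  simp [B', hi]

lemma B_last_apply (hd : 2 ≤ d) (hdn : d ≤ n - 1) (j : Fin n) :
    B n d ⟨n - 1, by omega⟩ j = if j = ⟨1, by omega⟩ then 1 else 0 := by
  have := j.isLt
  simp only [B, ne_eq, Fin.ext_iff]
  split_ifs <;> grind

lemma B'_last_apply (hd : 2 ≤ d) (hdn : d ≤ n - 1) (j : Fin n) :
    B' n d ⟨n - 1, by omega⟩ j = if j = ⟨0, by omega⟩ then 1 else 0 := by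
  have := j.isLt
  simp only [B', B, ne_eq, Fin.ext_iff]
  split_ifs <;> grind

lemma stronglyConnected_B (hd : 2 ≤ d) (hdn : d ≤ n - 1) : StronglyConnected (B n d) := by
  refine stronglyConnected_of_clique_of_path (d := d) (t := ⟨1, by omega⟩) (by omega) (by omega)
    ?_ ?_ ?_ (by simp; omega) ?_ <;>
  · intros
    simp only [B, ne_eq, Fin.ext_iff] at *
    split_ifs <;> grind

lemma stronglyConnected_B' (hd : 2 ≤ d) (hdn : d ≤ n - 1) : StronglyConnected (B' n d) := by
  refine stronglyConnected_of_clique_of_path (d := d) (t := ⟨0, by omega⟩) (by omega) (by omega)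
    ?_ ?_ ?_ (by simp; omega) ?_ <;>
  · intros
    simp only [B', B, ne_eq, Fin.ext_iff] at *
    split_ifs <;> grind

lemma lt_of_Qmat_B_mulVec_eq_smul (hd : 2 ≤ d) (hdn : d ≤ n - 1) {x : Fin n → ℝ}
    (hx : ∀ i, 0 < x i) {r : ℝ} (hQx : Qmat (B n d) *ᵥ x = r • x) :
    x ⟨1, by omega⟩ < x ⟨0, by omega⟩ := by
  refine lt_of_Qmat_mulVec_eq_smul hx hQx (w := ⟨d, by omega⟩) (Fin.ne_of_val_ne (by simp))
    (Fin.ne_of_val_ne (by simp; omega)) (Fin.ne_of_val_ne (by simp; omega)) ?_ ?_ ?_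
    (fun j hj0 hj1 => ?_) ?_
  · simp only [B, ne_eq]; grind
  · simp only [B, ne_eq]; grind
  · simp only [B, ne_eq, Fin.ext_iff]; grind
  · have := j.isLt
    simp only [B, ne_eq, Fin.ext_iff] at hj0 hj1 ⊢; grind
  · simp only [B, ne_eq, Fin.ext_iff]; grind

lemma Qmat_B'_mulVec (hd : 2 ≤ d) (hdn : d ≤ n - 1) (x : Fin n → ℝ) :
    Qmat (B' n d) *ᵥ x = Qmat (B n d) *ᵥ x +
      Pi.single ⟨n - 1, by omega⟩ (x ⟨0, by omega⟩ - x ⟨1, by omega⟩) := by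
  funext i
  rw [Pi.add_apply, Qmat_mulVec_apply, Qmat_mulVec_apply]
  by_cases hi : (i : ℕ) = n - 1
  · rw [show i = ⟨n - 1, by omega⟩ from Fin.ext hi]
    simp [outdeg, B_last_apply hd hdn, B'_last_apply hd hdn]
  · have hrow : B' n d i = B n d i := funext (B'_apply_of_ne i · hi)
    simp [outdeg, hrow, hi, Fin.ext_iff]

end B

/-- For `2 ≤ d ≤ n-1`, `q(B'_{n,d}) > q(B_{n,d})`. -/
theorem q_B_lt_q_B' {n d : ℕ} (hd : 2 ≤ d) (hdn : d ≤ n - 1) :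
    q (B n d) < q (B' n d) := by
  have : NeZero n := ⟨by omega⟩
  have : Nontrivial (Fin n) := Fin.nontrivial_iff_two_le.2 (by omega)
  obtain ⟨x, hx, hQx⟩ :=
    exists_pos_mulVec_eq_radius_smul (isPrimitive_Qmat (stronglyConnected_B hd hdn))
  have hx10 := lt_of_Qmat_B_mulVec_eq_smul hd hdn hx hQx
  have hQ'x := Qmat_B'_mulVec hd hdn x
  rw [hQx] at hQ'x
  refine lt_radius_of_smul_le_mulVec (isPrimitive_Qmat (stronglyConnected_B' hd hdn))
    (fun i => (hx i).le) (fun h => (hx ⟨0, by omega⟩).ne' (congrFun h _)) ?_ ?_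
  · rw [hQ'x]
    exact le_add_of_nonneg_right (Pi.single_nonneg.2 (sub_nonneg.2 hx10.le))
  · rw [hQ'x]
    intro h
    have := congrFun h ⟨n - 1, by omega⟩
    simp only [q, Pi.add_apply, Pi.smul_apply, smul_eq_mul, Pi.single_eq_same] at this
    linarith

end SignlessDigraph
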